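/- Let (G,X) be a G-system, x ∈ X, and F = (F_n)_{n∈D} a Følner net in G. Suppose C_F(x) is S-generic (there exists z ∈ C_F(x) with C_F(z) = C_F(x)), C_F(x) is not a minimal subset of (G,X), and the almost periodic points of (G,X) are dense in C_F(x). Then there exist two distinct points x₁, x₂ ∈ C_F(x) such that for every x̂ ∈ C_F(x), every open neighborhood U of x̂, every open neighborhood U₁ of x₁, and every open neighborhood U₂ of x₂, there exist y₁, y₂ ∈ U and g ∈ G with g y₁ ∈ U₁ and g y₂ ∈ U₂. -/

import Mathlib

/-!
`C_F(x)` is the orbit closure of the S-generic point `z`: positive upper density of `N(z, U)`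
forces the orbit of `z` to meet `U`, and `C_F(x)` is closed and, by Følner invariance of upper
density, `G`-invariant. Since `C_F(x)` is not minimal, it contains a nonempty closed invariant
set `M` with `z ∉ M`; take `x₁ = z`.

For an almost periodic `w`, the orbit closure of `(w, z)` in `X × X` contains a pair `(w, b)`
with `b ∈ M`: first reach some `(w', m)` with `m ∈ M`, then bring the first coordinate back to
`w`, which lies in the orbit closure of every point of its own orbit closure. Almost periodic
points accumulate at `z`, so by compactness some `(z, x₂)` with `x₂ ∈ M` is a limit of such
pairs. Hence near `z` there are `w` and `g` with `g • w` near `z` and `g • z` near `x₂`, and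
translating by `g₀` with `g₀ • z ∈ U` gives `y₁ = g₀ • w` and `y₂ = g₀ • z`.
-/

open Filter Metric Set

section Defs

variable {G : Type*} [Group G] [DecidableEq G]
variable {D : Type*} [Preorder D]

/-- `F` is a (left) Følner net in `G`. -/
def IsFolnerNet (F : D → Finset G) : Prop :=
  (∀ n, (F n).Nonempty) ∧
    ∀ g : G,
      Tendsto (fun n : D =>
          ((symmDiff ((F n).image fun h => g * h) (F n)).card : ℝ) / (F n).card)
        atTop (nhds 0)

/-- Upper density of `A ⊆ G` relative to the net `F`. -/
noncomputable def upperDensity (F : D → Finset G) (A : Set G) : ℝ :=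
  sSup {α : ℝ | ∀ m : D, ∃ n : D, m ≤ n ∧
    α ≤ (((F n : Set G) ∩ A).ncard : ℝ) / (F n).card}

variable {X : Type*} [MetricSpace X] [MulAction G X]

/-- The minimal `F`-center of attraction of `x`. -/
def minCenter (F : D → Finset G) (x : X) : Set X :=
  {y : X | ∀ U : Set X, IsOpen U → y ∈ U → 0 < upperDensity F {g : G | g • x ∈ U}}

end Defs

/-- `Λ` is a minimal subset of the `G`-system: nonempty, closed, `G`-invariant, and containing
no nonempty proper closed `G`-invariant subset. -/
def IsMinimalSubset (G : Type*) [Group G] {X : Type*} [MetricSpace X] [MulAction G X]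
    (Λ : Set X) : Prop :=
  Λ.Nonempty ∧ IsClosed Λ ∧ (∀ g : G, ∀ z ∈ Λ, g • z ∈ Λ) ∧
    ∀ Λ' ⊆ Λ, Λ'.Nonempty → IsClosed Λ' → (∀ g : G, ∀ z ∈ Λ', g • z ∈ Λ') → Λ' = Λ

/-- `S ⊆ G` is syndetic: there is a finite `F ⊆ G` with `⋃_{f ∈ F} f⁻¹ S = G`. -/
def IsSyndeticSet {G : Type*} [Group G] (S : Set G) : Prop :=
  ∃ F : Finset G, ∀ g : G, ∃ f ∈ F, f * g ∈ S

/-- `z` is an almost periodic point: `N(z, U)` is syndetic for every open neighborhood `U`. -/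
def IsAlmostPeriodicPt (G : Type*) [Group G] {X : Type*} [MetricSpace X] [MulAction G X]
    (z : X) : Prop :=
  ∀ U : Set X, IsOpen U → z ∈ U → IsSyndeticSet {g : G | g • z ∈ U}

lemma ncard_inter_le_ncard_inter_add_card_symmDiff {G : Type*} [Group G] [DecidableEq G]
    (F : Finset G) {g : G} {A B : Set G} (hAB : MapsTo (g * ·) A B) :
    ((F : Set G) ∩ A).ncard ≤
      ((F : Set G) ∩ B).ncard + (symmDiff (F.image (g⁻¹ * ·)) F).card := by
  set F' : Finset G := F.image (g⁻¹ * ·)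
  have hcover : (F : Set G) ∩ A ⊆ ((F' : Set G) ∩ A) ∪ ((F : Set G) \ F') := by
    rintro a ⟨haF, haA⟩
    by_cases ha : a ∈ (F' : Set G)
    exacts [Or.inl ⟨ha, haA⟩, Or.inr ⟨haF, ha⟩]
  have htranslate : ((F' : Set G) ∩ A).ncard ≤ ((F : Set G) ∩ B).ncard := by
    rw [← Set.ncard_image_of_injective _ (mul_right_injective g)]
    refine Set.ncard_le_ncard ?_ (F.finite_toSet.inter_of_left B)
    rintro _ ⟨a, ⟨haF', haA⟩, rfl⟩
    obtain ⟨f, hf, rfl⟩ := Finset.mem_image.mp haF'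
    exact ⟨by simpa using hf, hAB haA⟩
  have hdiff : ((F : Set G) \ F').ncard ≤ (symmDiff F' F).card := by
    rw [← Set.ncard_coe_finset, Finset.coe_symmDiff]
    exact Set.ncard_le_ncard (fun a ha => Or.inr ha) (by simp [← Finset.coe_symmDiff])
  calc ((F : Set G) ∩ A).ncard
      ≤ (((F' : Set G) ∩ A) ∪ ((F : Set G) \ F')).ncard :=
        Set.ncard_le_ncard hcover ((F'.finite_toSet.inter_of_left A).union F.finite_toSet.sdiff)
    _ ≤ ((F' : Set G) ∩ A).ncard + ((F : Set G) \ F').ncard := Set.ncard_union_le _ _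
    _ ≤ _ := Nat.add_le_add htranslate hdiff

section UpperDensity

variable {G : Type*} {D : Type*} [Preorder D] [Nonempty D] {F : D → Finset G}

lemma bddAbove_upperDensity_set (hF : ∀ n, (F n).Nonempty) (A : Set G) :
    BddAbove {α : ℝ | ∀ m : D, ∃ n : D, m ≤ n ∧
      α ≤ (((F n : Set G) ∩ A).ncard : ℝ) / (F n).card} := by
  refine ⟨1, fun α hα => ?_⟩
  obtain ⟨n, -, hn⟩ := hα (Classical.arbitrary D)
  refine hn.trans ((div_le_one (by exact_mod_cast (hF n).card_pos)).2 ?_)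
  exact_mod_cast (Set.ncard_le_ncard inter_subset_left (F n).finite_toSet).trans_eq
    (Set.ncard_coe_finset _)

lemma nonempty_of_upperDensity_pos {A : Set G} (h : 0 < upperDensity F A) : A.Nonempty := by
  refine nonempty_iff_ne_empty.2 fun hA => h.not_ge (Real.sSup_le (fun α hα => ?_) le_rfl)
  obtain ⟨n, -, hn⟩ := hα (Classical.arbitrary D)
  simpa [hA] using hn

lemma upperDensity_le_of_mapsTo [Group G] [DecidableEq G] [IsDirected D (· ≤ ·)]
    (hF : IsFolnerNet F) {g : G} {A B : Set G} (hAB : MapsTo (g * ·) A B) :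
    upperDensity F A ≤ upperDensity F B := by
  refine csSup_le ⟨0, fun m => ⟨m, le_rfl, by positivity⟩⟩ fun α hα => ?_
  refine le_of_forall_sub_le fun ε hε => le_csSup (bddAbove_upperDensity_set hF.1 B) ?_
  obtain ⟨m₀, hm₀⟩ := eventually_atTop.1 <| (hF.2 g⁻¹).eventually (gt_mem_nhds hε)
  intro m
  obtain ⟨m₁, hm₁, hm₀₁⟩ := directed_of (· ≤ ·) m m₀
  obtain ⟨n, hn, hαn⟩ := hα m₁
  refine ⟨n, hm₁.trans hn, ?_⟩
  have hcard : (0 : ℝ) < (F n).card := by exact_mod_cast (hF.1 n).card_pos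
  have hsmall := hm₀ n (hm₀₁.trans hn)
  have hcount : (((F n : Set G) ∩ A).ncard : ℝ) ≤ (((F n : Set G) ∩ B).ncard : ℝ) +
      (symmDiff ((F n).image (g⁻¹ * ·)) (F n)).card := by
    exact_mod_cast ncard_inter_le_ncard_inter_add_card_symmDiff (F n) hAB
  rw [div_lt_iff₀ hcard] at hsmall
  rw [le_div_iff₀ hcard] at hαn ⊢
  linarith

end UpperDensity

open MulAction

section OrbitClosure

variable {G : Type*} [Group G] {X : Type*} [TopologicalSpace X] [MulAction G X]

lemma closure_orbit_subset_of_smul_mem {s : Set X} (hs : IsClosed s)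
    (hinv : ∀ g : G, ∀ y ∈ s, g • y ∈ s) {x : X} (hx : x ∈ s) : closure (orbit G x) ⊆ s :=
  hs.closure_subset_iff.2 <| by rintro _ ⟨g, rfl⟩; exact hinv g x hx

lemma smul_mem_closure_orbit [ContinuousConstSMul G X] (g : G) {x y : X}
    (hy : y ∈ closure (orbit G x)) : g • y ∈ closure (orbit G x) :=
  smul_closure_orbit_subset g x (smul_mem_smul_set hy)

lemma image_closure_orbit [CompactSpace X] {Y : Type*} [TopologicalSpace Y] [T2Space Y]
    [MulAction G Y] {f : X → Y} (hf : Continuous f) (hfg : ∀ (g : G) y, f (g • y) = g • f y)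
    (x : X) : f '' closure (orbit G x) = closure (orbit G (f x)) := by
  rw [image_closure_of_isCompact isClosed_closure.isCompact hf.continuousOn, orbit, orbit,
    ← range_comp]
  simp only [Function.comp_def, hfg]

end OrbitClosure

lemma IsAlmostPeriodicPt.mem_closure_orbit {G : Type*} [Group G] {X : Type*} [MetricSpace X]
    [MulAction G X] [ContinuousConstSMul G X] {w b : X} (hw : IsAlmostPeriodicPt G w)
    (hb : b ∈ closure (orbit G w)) : w ∈ closure (orbit G b) := by
  refine Metric.mem_closure_iff.2 fun ε hε => ?_
  obtain ⟨K, hK⟩ := hw (ball w (ε / 2)) isOpen_ball (mem_ball_self (half_pos hε))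
  have horbit : orbit G w ⊆ ⋃ f ∈ K, (f • ·) ⁻¹' closedBall w (ε / 2) := by
    rintro _ ⟨g, rfl⟩
    obtain ⟨f, hfK, hf⟩ := hK g
    exact mem_biUnion hfK (ball_subset_closedBall (by simpa [mul_smul] using hf))
  have hclosed : IsClosed (⋃ f ∈ K, (f • ·) ⁻¹' closedBall w (ε / 2)) :=
    isClosed_biUnion_finset fun f _ => isClosed_closedBall.preimage (continuous_const_smul f)
  obtain ⟨f, -, hf⟩ := mem_iUnion₂.1 (hclosed.closure_subset_iff.2 horbit hb)
  exact ⟨f • b, ⟨f, rfl⟩, by rw [dist_comm]; linarith [mem_closedBall.1 hf]⟩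

section ProductSystem

variable {G : Type*} [Group G] {X : Type*} [MetricSpace X] [MulAction G X]
  [ContinuousConstSMul G X]

lemma exists_mem_pair_mem_closure_orbit [CompactSpace X] {w z : X}
    (hw : IsAlmostPeriodicPt G w) {M : Set X} (hM : IsClosed M)
    (hMinv : ∀ g : G, ∀ y ∈ M, g • y ∈ M) (hMne : M.Nonempty) (hMz : M ⊆ closure (orbit G z)) :
    ∃ b ∈ M, (w, b) ∈ closure (orbit G (w, z)) := by
  obtain ⟨m, hm⟩ := hMne
  obtain ⟨p, hp, rfl⟩ : m ∈ Prod.snd '' closure (orbit G (w, z)) := by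
    rw [image_closure_orbit continuous_snd fun _ _ => rfl]
    exact hMz hm
  have hp₁ : p.1 ∈ closure (orbit G w) := by
    rw [← image_closure_orbit (G := G) continuous_fst (fun _ _ => rfl) (w, z)]
    exact ⟨p, hp, rfl⟩
  have hsub : closure (orbit G p) ⊆ closure (orbit G (w, z)) ∩ univ ×ˢ M :=
    closure_orbit_subset_of_smul_mem (isClosed_closure.inter (isClosed_univ.prod hM))
      (fun g _ hq => ⟨smul_mem_closure_orbit g hq.1, trivial, hMinv g _ hq.2.2⟩)
      ⟨hp, trivial, hm⟩
  obtain ⟨q, hq, hqw⟩ : w ∈ Prod.fst '' closure (orbit G p) := by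
    rw [image_closure_orbit continuous_fst fun _ _ => rfl]
    exact hw.mem_closure_orbit hp₁
  refine ⟨q.2, (hsub hq).2.2, ?_⟩
  rw [show (w, q.2) = q from Prod.ext hqw.symm rfl]
  exact (hsub hq).1

lemma exists_forall_isOpen_exists_smul_mem [CompactSpace X] {z : X} {M : Set X} (hM : IsClosed M)
    (hMinv : ∀ g : G, ∀ y ∈ M, g • y ∈ M) (hMne : M.Nonempty) (hMz : M ⊆ closure (orbit G z))
    (hz : z ∈ closure {w : X | IsAlmostPeriodicPt G w}) :
    ∃ x₂ ∈ M, ∀ V : Set X, IsOpen V → z ∈ V → ∀ W : Set X, IsOpen W → x₂ ∈ W →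
      ∃ w ∈ V, ∃ g : G, g • w ∈ V ∧ g • z ∈ W := by
  set Q : Set (X × X) := {p | p.2 ∈ M ∧ p ∈ closure (orbit G (p.1, z))}
  have hQ : {w : X | IsAlmostPeriodicPt G w} ⊆ Prod.fst '' closure Q := fun w hw => by
    obtain ⟨b, hbM, hb⟩ := exists_mem_pair_mem_closure_orbit hw hM hMinv hMne hMz
    exact ⟨(w, b), subset_closure ⟨hbM, hb⟩, rfl⟩
  obtain ⟨⟨_, x₂⟩, hx₂, rfl⟩ :=
    (isClosed_closure.isCompact.image continuous_fst).isClosed.closure_subset_iff.2 hQ hz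
  refine ⟨x₂, closure_minimal (fun _ hp => hp.1) (hM.preimage continuous_snd) hx₂, ?_⟩
  intro V hV hzV W hW hx₂W
  obtain ⟨⟨w, b⟩, ⟨hwV, hbW⟩, -, hwb⟩ := mem_closure_iff.1 hx₂ _ (hV.prod hW) ⟨hzV, hx₂W⟩
  obtain ⟨_, ⟨hgw, hgz⟩, g, rfl⟩ := mem_closure_iff.1 hwb _ (hV.prod hW) ⟨hwV, hbW⟩
  exact ⟨w, hwV, g, hgw, hgz⟩

lemma exists_isClosed_invariant_not_mem_of_not_isMinimalSubset {z : X}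
    (h : ¬ IsMinimalSubset G (closure (orbit G z))) :
    ∃ M ⊆ closure (orbit G z), M.Nonempty ∧ IsClosed M ∧ (∀ g : G, ∀ y ∈ M, g • y ∈ M) ∧
      z ∉ M := by
  by_contra! hcon
  refine h ⟨⟨z, subset_closure (mem_orbit_self z)⟩, isClosed_closure,
    fun g _ => smul_mem_closure_orbit g, fun M hMz hMne hM hMinv => ?_⟩
  exact hMz.antisymm (closure_orbit_subset_of_smul_mem hM hMinv (hcon M hMz hMne hM hMinv))

end ProductSystem

section CenterOfAttraction

variable {G : Type*} [Group G] {D : Type*} [Preorder D]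
  {X : Type*} [MetricSpace X] [MulAction G X] {F : D → Finset G}

lemma isClosed_minCenter (F : D → Finset G) (x : X) : IsClosed (minCenter F x) :=
  isClosed_of_closure_subset fun y hy U hU hyU => by
    obtain ⟨y', hy'U, hy'⟩ := mem_closure_iff.1 hy U hU hyU
    exact hy' U hU hy'U

lemma minCenter_subset_closure_orbit [Nonempty D] (x : X) :
    minCenter F x ⊆ closure (orbit G x) := fun y hy =>
  mem_closure_iff.2 fun U hU hyU => by
    obtain ⟨g, hg⟩ := nonempty_of_upperDensity_pos (hy U hU hyU)
    exact ⟨g • x, hg, g, rfl⟩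

lemma smul_mem_minCenter [DecidableEq G] [Nonempty D] [IsDirected D (· ≤ ·)] [ContinuousConstSMul G X]
    (hF : IsFolnerNet F) (g : G) {x y : X} (hy : y ∈ minCenter F x) :
    g • y ∈ minCenter F x := fun U hU hgyU =>
  (hy _ (hU.preimage (continuous_const_smul g)) hgyU).trans_le <|
    upperDensity_le_of_mapsTo hF fun h hh => by simpa [mul_smul] using hh

lemma minCenter_eq_closure_orbit [DecidableEq G] [Nonempty D] [IsDirected D (· ≤ ·)] [ContinuousConstSMul G X]
    (hF : IsFolnerNet F) {x z : X} (hz : z ∈ minCenter F x)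
    (hzx : minCenter F z = minCenter F x) : minCenter F x = closure (orbit G z) :=
  (hzx ▸ minCenter_subset_closure_orbit z).antisymm <|
    closure_orbit_subset_of_smul_mem (isClosed_minCenter F x)
      (fun g _ => smul_mem_minCenter hF g) hz

end CenterOfAttraction

theorem two_sensitivity_of_Sgeneric_nonminimal_general
    {G : Type*} [Group G] [DecidableEq G]
    {D : Type*} [Preorder D] [IsDirected D (· ≤ ·)] [Nonempty D]
    {X : Type*} [MetricSpace X] [CompactSpace X] [MulAction G X]
    (hcont : ∀ g : G, Continuous fun y : X => g • y)
    (Fol : D → Finset G) (hFol : IsFolnerNet Fol) (x : X)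
    (hS : ∃ z ∈ minCenter Fol x, minCenter Fol z = minCenter Fol x)
    (hnotmin : ¬ IsMinimalSubset G (minCenter Fol x))
    (hdense : minCenter Fol x ⊆
      closure {z : X | z ∈ minCenter Fol x ∧ IsAlmostPeriodicPt G z}) :
    ∃ x₁ ∈ minCenter Fol x, ∃ x₂ ∈ minCenter Fol x, x₁ ≠ x₂ ∧
      ∀ xhat ∈ minCenter Fol x, ∀ U : Set X, IsOpen U → xhat ∈ U →
        ∀ U₁ : Set X, IsOpen U₁ → x₁ ∈ U₁ → ∀ U₂ : Set X, IsOpen U₂ → x₂ ∈ U₂ →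
          ∃ y₁ ∈ U, ∃ y₂ ∈ U, ∃ g : G, g • y₁ ∈ U₁ ∧ g • y₂ ∈ U₂ := by
  have : ContinuousConstSMul G X := ⟨hcont⟩
  obtain ⟨z, hzC, hzx⟩ := hS
  have hC := minCenter_eq_closure_orbit hFol hzC hzx
  have hzAP : z ∈ closure {w : X | IsAlmostPeriodicPt G w} :=
    closure_mono (fun _ hw => hw.2) (hdense hzC)
  rw [hC] at hnotmin ⊢
  obtain ⟨M, hMz, hMne, hM, hMinv, hzM⟩ :=
    exists_isClosed_invariant_not_mem_of_not_isMinimalSubset hnotmin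
  obtain ⟨x₂, hx₂M, hx₂⟩ := exists_forall_isOpen_exists_smul_mem hM hMinv hMne hMz hzAP
  refine ⟨z, subset_closure (mem_orbit_self z), x₂, hMz hx₂M, fun h => hzM (h ▸ hx₂M), ?_⟩
  intro xhat hxhat U hU hxhatU U₁ hU₁ hzU₁ U₂ hU₂ hx₂U₂
  obtain ⟨_, hg₀U, g₀, rfl⟩ := mem_closure_iff.1 hxhat U hU hxhatU
  obtain ⟨w, ⟨hwU, -⟩, g, ⟨-, hgwU₁⟩, hgzU₂⟩ :=
    hx₂ ((g₀ • ·) ⁻¹' U ∩ U₁) ((hU.preimage (continuous_const_smul g₀)).inter hU₁)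
      ⟨hg₀U, hzU₁⟩ U₂ hU₂ hx₂U₂
  refine ⟨g₀ • w, hwU, g₀ • z, hg₀U, g * g₀⁻¹, ?_, ?_⟩ <;> simpa [mul_smul]

/-- Theorem 1.5: 2-sensitivity near an S-generic non-minimal center of attraction with dense
almost periodic points. -/
theorem two_sensitivity_of_Sgeneric_nonminimal
    {G : Type*} [Group G] [Infinite G] [DecidableEq G]
    {D : Type*} [Preorder D] [IsDirected D (· ≤ ·)] [Nonempty D]
    {X : Type*} [MetricSpace X] [CompactSpace X] [MulAction G X]
    (hcont : ∀ g : G, Continuous fun y : X => g • y)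
    (Fol : D → Finset G) (hFol : IsFolnerNet Fol) (x : X)
    (hS : ∃ z ∈ minCenter Fol x, minCenter Fol z = minCenter Fol x)
    (hnotmin : ¬ IsMinimalSubset G (minCenter Fol x))
    (hdense : minCenter Fol x ⊆
      closure {z : X | z ∈ minCenter Fol x ∧ IsAlmostPeriodicPt G z}) :
    ∃ x₁ ∈ minCenter Fol x, ∃ x₂ ∈ minCenter Fol x, x₁ ≠ x₂ ∧
      ∀ xhat ∈ minCenter Fol x, ∀ U : Set X, IsOpen U → xhat ∈ U →
        ∀ U₁ : Set X, IsOpen U₁ → x₁ ∈ U₁ → ∀ U₂ : Set X, IsOpen U₂ → x₂ ∈ U₂ →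
          ∃ y₁ ∈ U, ∃ y₂ ∈ U, ∃ g : G, g • y₁ ∈ U₁ ∧ g • y₂ ∈ U₂ :=
  two_sensitivity_of_Sgeneric_nonminimal_general hcont Fol hFol x hS hnotmin hdense
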